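/- Let n be a natural number, m an integer with n ≤ m - 2, and α, β, x real numbers such that (α + 1)_k ≠ 0 for all 0 ≤ k ≤ n and (m - n - x)_k ≠ 0 for all 0 ≤ k ≤ n. Then (m - n - x)_n · ∑_{k=0}^{n} ((-n)_k (-n - β)_k (1 - x)_k) / ((α + 1)_k (m - n - x)_k k!) = (m - n - 1)_n · ∑_{k=0}^{n} ((-n)_k (n + α + β + 1)_k (1 - x)_k) / ((α + 1)_k (2 - m)_k k!). -/

import Mathlib

/-- Pochhammer symbol (rising factorial) for a real number. -/
noncomputable def poch (a : ℝ) (k : ℕ) : ℝ := (ascPochhammer ℝ k).eval a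

lemma poch_zero (x : ℝ) : poch x 0 = 1 := by simp [poch]

lemma poch_succ (x : ℝ) (k : ℕ) : poch x (k+1) = poch x k * (x + k) := by
  simp [poch, ascPochhammer_succ_right]

lemma poch_add (x : ℝ) (p q : ℕ) : poch x (p + q) = poch x p * poch (x + p) q := by
  induction q with
  | zero => simp [poch_zero]
  | succ q ih =>
      rw [← add_assoc, poch_succ, ih, poch_succ]
      push_cast; ring

lemma poch_succ_left (x : ℝ) (k : ℕ) : poch x (k+1) = x * poch (x + 1) k := by
  have := poch_add x 1 k
  simpa [add_comm, poch_succ, poch_zero] using this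

lemma poch_reflect (y : ℝ) (k : ℕ) : poch y k = (-1)^k * poch (1 - y - k) k := by
  induction k generalizing y with
  | zero => simp [poch_zero]
  | succ k ih =>
      rw [poch_succ, ih y, poch_succ_left]
      have h1 : (1 : ℝ) - y - (k+1 : ℕ) + 1 = 1 - y - k := by push_cast; ring
      rw [h1]
      push_cast; ring

open Finset in
lemma poch_prod (x : ℝ) (k : ℕ) : poch x k = ∏ i ∈ range k, (x + i) := by
  induction k with
  | zero => simp [poch_zero]
  | succ k ih => rw [poch_succ, prod_range_succ, ih]

lemma poch_negnat {N i : ℕ} (h : i ≤ N) :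
    poch (-(N:ℝ)) i = (-1)^i * (i.factorial : ℝ) * (N.choose i : ℝ) := by
  induction i with
  | zero => simp [poch_zero]
  | succ i ih =>
      have hi : i ≤ N := le_trans (Nat.le_succ i) h
      rw [poch_succ, ih hi]
      have hch : (N.choose (i+1) : ℝ) * (i+1) = (N.choose i : ℝ) * ((N : ℝ) - i) := by
        have := Nat.choose_succ_right_eq N i
        have hN : ((N - i : ℕ) : ℝ) = (N : ℝ) - i := by
          push_cast [Nat.cast_sub hi]; ring
        calc (N.choose (i+1) : ℝ) * (i+1) = ((N.choose (i+1) * (i+1) : ℕ) : ℝ) := by push_cast; ring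
        _ = ((N.choose i * (N - i) : ℕ) : ℝ) := by rw [this]
        _ = (N.choose i : ℝ) * ((N:ℝ) - i) := by push_cast [Nat.cast_sub hi]; ring
      have hf : ((i+1).factorial : ℝ) = (i.factorial : ℝ) * (i+1) := by
        push_cast [Nat.factorial_succ]; ring
      rw [hf]
      linear_combination ((-1:ℝ))^i * (i.factorial:ℝ) * hch

open Finset

lemma poch_vdm (N : ℕ) (B C : ℝ) :
    ∑ i ∈ range (N+1), (-1:ℝ)^i * (N.choose i : ℝ) * poch B i * poch (C + i) (N - i)
      = poch (C - B) N := by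
  induction N generalizing B C with
  | zero => simp [poch_zero]
  | succ N ih =>
      rw [Finset.sum_range_succ' _ (N+1)]
      have hsplit : ∀ i ∈ range (N+1),
          (-1:ℝ)^(i+1) * ((N+1).choose (i+1) : ℝ) * poch B (i+1) * poch (C + (i+1:ℕ)) (N+1-(i+1))
          = (-1:ℝ)^(i+1) * (N.choose i : ℝ) * poch B (i+1) * poch (C + (i+1:ℕ)) (N-i)
            + (-1:ℝ)^(i+1) * (N.choose (i+1) : ℝ) * poch B (i+1) * poch (C + (i+1:ℕ)) (N-i) := by
        intro i hi
        have : ((N+1).choose (i+1) : ℝ) = (N.choose i : ℝ) + (N.choose (i+1) : ℝ) := by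
          rw [Nat.choose_succ_succ]; push_cast; ring
        rw [show N+1-(i+1) = N-i from by omega, this]; ring
      rw [Finset.sum_congr rfl hsplit, Finset.sum_add_distrib]
      -- second family: equals -B * poch (C - B) N  via ih (B+1) (C+1)
      have h2 : ∑ i ∈ range (N+1),
          (-1:ℝ)^(i+1) * (N.choose i : ℝ) * poch B (i+1) * poch (C + (i+1:ℕ)) (N-i)
          = -B * poch (C - B) N := by
        have := ih (B+1) (C+1)
        rw [show C + 1 - (B+1) = C - B from by ring] at this
        rw [← this, Finset.mul_sum]
        apply Finset.sum_congr rfl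
        intro i hi
        rw [poch_succ_left]
        have : C + ((i:ℝ)+1) = C + 1 + i := by ring
        push_cast [this]
        ring
      -- first family plus the i = 0 term: reassemble to sum over range (N+2) then drop top
      have h1 : (∑ i ∈ range (N+1),
          (-1:ℝ)^(i+1) * (N.choose (i+1) : ℝ) * poch B (i+1) * poch (C + (i+1:ℕ)) (N-i))
          + (-1:ℝ)^0 * (((N+1).choose 0 : ℕ) : ℝ) * poch B 0 * poch (C + (0:ℕ)) (N+1-0)
          = (C + N) * poch (C - B) N := by
        have hre : (∑ i ∈ range (N+1),
            (-1:ℝ)^(i+1) * (N.choose (i+1) : ℝ) * poch B (i+1) * poch (C + (i+1:ℕ)) (N+1-(i+1)))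
            + (-1:ℝ)^0 * ((N.choose 0 : ℕ) : ℝ) * poch B 0 * poch (C + (0:ℕ)) (N+1-0)
            = ∑ i ∈ range (N+2), (-1:ℝ)^i * (N.choose i : ℝ) * poch B i * poch (C + i) (N+1-i) := by
          rw [Finset.sum_range_succ' (fun i => (-1:ℝ)^i * (N.choose i : ℝ) * poch B i * poch (C + i) (N+1-i)) (N+1)]
        simp only [show ∀ i, N+1-(i+1) = N-i from fun i => by omega] at hre
        rw [show ((N+1).choose 0 : ℕ) = N.choose 0 from by simp, hre,
          Finset.sum_range_succ, Nat.choose_succ_self, ← ih B C]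
        simp only [Nat.cast_zero, mul_zero, zero_mul, add_zero]
        rw [Finset.mul_sum]
        apply Finset.sum_congr rfl
        intro i hi
        simp only [mem_range] at hi
        have hle : i ≤ N := by omega
        rw [show N+1-i = (N-i)+1 from by omega, poch_succ,
          show C + (i:ℝ) + ((N - i : ℕ) : ℝ) = C + N from by
            push_cast [Nat.cast_sub hle]; ring]
        ring
      rw [add_assoc, h1, h2, poch_succ]
      ring

lemma hahn_main (n : ℕ) (a b c d : ℝ)
    (hc : ∀ k : ℕ, k ≤ n → poch c k ≠ 0)
    (hd : ∀ k : ℕ, k ≤ n → poch d k ≠ 0)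
    (hE : ∀ k : ℕ, k ≤ n → poch (a - d - n + 1) k ≠ 0) :
    poch d n * ∑ k ∈ range (n+1),
        (poch (-(n:ℝ)) k * poch b k * poch a k) /
          (poch c k * poch d k * (k.factorial : ℝ))
    = poch (d - a) n * ∑ k ∈ range (n+1),
        (poch (-(n:ℝ)) k * poch (c - b) k * poch a k) /
          (poch c k * poch (a - d - n + 1) k * (k.factorial : ℝ)) := by
  have hfac : ∀ k : ℕ, (k.factorial : ℝ) ≠ 0 :=
    fun k => Nat.cast_ne_zero.mpr (Nat.factorial_ne_zero k)
  rw [Finset.mul_sum, Finset.mul_sum]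
  -- Step A : rewrite LHS terms
  have hLk : ∀ k ∈ range (n+1),
      poch d n * ((poch (-(n:ℝ)) k * poch b k * poch a k) /
          (poch c k * poch d k * (k.factorial : ℝ)))
      = poch (-(n:ℝ)) k * poch b k * poch a k * poch (d + k) (n - k) /
          (poch c k * (k.factorial:ℝ)) := by
    intro k hk
    simp only [mem_range] at hk
    have hkn : k ≤ n := by omega
    have hdn : poch d n = poch d k * poch (d + k) (n - k) := by
      rw [← poch_add]; congr 1; omega
    have h1 := hc k hkn; have h2 := hd k hkn
    rw [hdn]; field_simp
  -- Step B : rewrite RHS terms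
  have hRk : ∀ k ∈ range (n+1),
      poch (d - a) n * ((poch (-(n:ℝ)) k * poch (c - b) k * poch a k) /
          (poch c k * poch (a - d - n + 1) k * (k.factorial : ℝ)))
      = (-1:ℝ)^k * poch (-(n:ℝ)) k * poch (c - b) k * poch a k * poch (d - a) (n - k) /
          (poch c k * (k.factorial:ℝ)) := by
    intro k hk
    simp only [mem_range] at hk
    have hkn : k ≤ n := by omega
    have hsplit : poch (d - a) n = poch (d - a) (n - k) * poch (d - a + ((n - k : ℕ):ℝ)) k := by
      rw [← poch_add]; congr 1; omega
    have hrefl : poch (d - a + ((n - k : ℕ):ℝ)) k = (-1:ℝ)^k * poch (a - d - n + 1) k := by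
      have h := poch_reflect (d - a + ((n - k : ℕ):ℝ)) k
      rw [show (1:ℝ) - (d - a + ((n - k : ℕ):ℝ)) - k = a - d - n + 1 from by
        push_cast [Nat.cast_sub hkn]; ring] at h
      exact h
    have h1 := hc k hkn; have hP := hE k hkn
    rw [hsplit, hrefl]; field_simp
  rw [Finset.sum_congr rfl hLk, Finset.sum_congr rfl hRk]
  -- Step C : expand poch b k by Vandermonde, swap sums, resum by Vandermonde
  have hb : ∀ k : ℕ, poch b k
      = ∑ j ∈ range (k+1), (-1:ℝ)^j * (k.choose j : ℝ) * poch (c - b) j * poch (c + j) (k - j) := by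
    intro k
    have h := poch_vdm k (c - b) c
    rw [show c - (c - b) = b from by ring] at h
    exact h.symm
  set F : ℕ → ℕ → ℝ := fun j k =>
    ((-1:ℝ)^j * (k.choose j : ℝ) * poch (c - b) j * poch (c + j) (k - j)) *
      (poch (-(n:ℝ)) k * poch a k * poch (d + k) (n - k) / (poch c k * (k.factorial:ℝ)))
    with hF
  have hexp : ∀ k ∈ range (n+1),
      poch (-(n:ℝ)) k * poch b k * poch a k * poch (d + k) (n - k) /
          (poch c k * (k.factorial:ℝ))
      = ∑ j ∈ range (k+1), F j k := by
    intro k _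
    rw [show poch (-(n:ℝ)) k * poch b k * poch a k * poch (d + k) (n - k) /
          (poch c k * (k.factorial:ℝ))
        = poch b k * (poch (-(n:ℝ)) k * poch a k * poch (d + k) (n - k) /
          (poch c k * (k.factorial:ℝ))) from by ring, hb k, Finset.sum_mul]
  rw [Finset.sum_congr rfl hexp]
  have hswap : ∑ k ∈ range (n+1), ∑ j ∈ range (k+1), F j k
      = ∑ j ∈ range (n+1), ∑ k ∈ Ico j (n+1), F j k := by
    simp only [← Nat.Ico_zero_eq_range]
    exact (Finset.sum_Ico_Ico_comm 0 (n+1) F).symm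
  rw [hswap]
  -- per j : inner sum over k equals the RHS term
  apply Finset.sum_congr rfl
  intro j hj
  simp only [mem_range] at hj
  have hjn : j ≤ n := by omega
  rw [Finset.sum_Ico_eq_sum_range]
  rw [show n + 1 - j = (n - j) + 1 from by omega]
  set M := n - j with hM
  have hterm : ∀ i ∈ range (M+1),
      F j (j + i)
      = ((-1:ℝ)^j * poch (-(n:ℝ)) j * poch (c - b) j * poch a j / (poch c j * (j.factorial:ℝ))) *
        ((-1:ℝ)^i * (M.choose i : ℝ) * poch (a + j) i * poch ((d + j) + i) (M - i)) := by
    intro i hi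
    simp only [mem_range] at hi
    have hiM : i ≤ M := by omega
    have hjin : j + i ≤ n := by omega
    -- expand all compound pochhammers
    have e1 : poch (-(n:ℝ)) (j + i) = poch (-(n:ℝ)) j * poch (-(M:ℝ)) i := by
      rw [poch_add, show -(n:ℝ) + j = -((M:ℝ)) from by
        rw [hM]; push_cast [Nat.cast_sub hjn]; ring]
    have e2 : poch a (j + i) = poch a j * poch (a + j) i := poch_add a j i
    have e3 : poch c (j + i) = poch c j * poch (c + j) i := poch_add c j i
    have e4 : poch (-(M:ℝ)) i = (-1:ℝ)^i * (i.factorial : ℝ) * (M.choose i : ℝ) :=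
      poch_negnat hiM
    have e5 : (((j+i).factorial : ℕ) : ℝ)
        = ((j+i).choose j : ℝ) * (j.factorial : ℝ) * (i.factorial : ℝ) := by
      have h := Nat.choose_mul_factorial_mul_factorial (Nat.le_add_right j i)
      rw [show j + i - j = i from by omega] at h
      exact_mod_cast h.symm
    have e6 : poch (d + ((j+i : ℕ):ℝ)) (n - (j+i)) = poch ((d + j) + i) (M - i) := by
      rw [show d + ((j+i : ℕ):ℝ) = (d + j) + i from by push_cast; ring,
        show n - (j+i) = M - i from by omega]
    have hc2 : poch c j * poch (c + j) i ≠ 0 := by rw [← e3]; exact hc (j+i) hjin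
    have hcj : poch c j ≠ 0 := fun h => hc2 (by rw [h]; ring)
    have hcji : poch (c + j) i ≠ 0 := fun h => hc2 (by rw [h]; ring)
    have hch : ((j+i).choose j : ℝ) ≠ 0 := by
      exact Nat.cast_ne_zero.mpr (Nat.choose_pos (Nat.le_add_right j i)).ne'
    have hfj : (j.factorial : ℝ) ≠ 0 := Nat.cast_ne_zero.mpr (Nat.factorial_ne_zero j)
    have hfi : (i.factorial : ℝ) ≠ 0 := Nat.cast_ne_zero.mpr (Nat.factorial_ne_zero i)
    rw [hF]
    simp only []
    rw [show (j + i) - j = i from by omega, e1, e2, e3, e4, e5, e6]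
    field_simp
  rw [Finset.sum_congr rfl hterm, ← Finset.mul_sum]
  have hv := poch_vdm M (a + j) (d + j)
  rw [show d + (j:ℝ) - (a + j) = d - a from by ring] at hv
  rw [hv]
  rw [hM]
  field_simp

/-- Rewriting Chebyshev's finite-sum expression for his orthogonal polynomials
in terms of the Hahn polynomial Q_n(x-1; α, β, m-2):
(m-n-x)_n ₃F₂(-n, -n-β, 1-x; α+1, m-n-x; 1) = (m-n-1)_n ₃F₂(-n, n+α+β+1, 1-x; α+1, 2-m; 1). -/
theorem chebyshev_hahn_rewrite (n : ℕ) (m : ℤ) (hnm : (n : ℤ) ≤ m - 2)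
    (α β x : ℝ)
    (hα : ∀ k : ℕ, k ≤ n → poch (α + 1) k ≠ 0)
    (hmx : ∀ k : ℕ, k ≤ n → poch ((m : ℝ) - n - x) k ≠ 0) :
    poch ((m : ℝ) - n - x) n *
        ∑ k ∈ Finset.range (n + 1),
          (poch (-(n : ℝ)) k * poch (-(n : ℝ) - β) k * poch (1 - x) k) /
            (poch (α + 1) k * poch ((m : ℝ) - n - x) k * (Nat.factorial k : ℝ))
      = poch ((m : ℝ) - n - 1) n *
        ∑ k ∈ Finset.range (n + 1),
          (poch (-(n : ℝ)) k * poch ((n : ℝ) + α + β + 1) k * poch (1 - x) k) /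
            (poch (α + 1) k * poch (2 - (m : ℝ)) k * (Nat.factorial k : ℝ)) := by
  have h2m : ∀ k : ℕ, k ≤ n → poch (2 - (m : ℝ)) k ≠ 0 := by
    intro k hk
    rw [poch_prod, Finset.prod_ne_zero_iff]
    intro i hi
    simp only [Finset.mem_range] at hi
    have : (2 - (m:ℝ) + i) = (((2 - m + i : ℤ)) : ℝ) := by push_cast; ring
    rw [this]
    exact_mod_cast Int.cast_ne_zero.mpr (show (2 - m + (i:ℤ)) ≠ 0 from by omega)
  have hE : ∀ k : ℕ, k ≤ n → poch ((1 - x) - ((m:ℝ) - n - x) - n + 1) k ≠ 0 := by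
    intro k hk
    rw [show (1 - x) - ((m:ℝ) - n - x) - (n:ℝ) + 1 = 2 - (m:ℝ) from by ring]
    exact h2m k hk
  have h := hahn_main n (1 - x) (-(n:ℝ) - β) (α + 1) ((m:ℝ) - n - x) hα hmx hE
  rw [show ((m:ℝ) - n - x) - (1 - x) = (m:ℝ) - n - 1 from by ring,
    show (α + 1) - (-(n:ℝ) - β) = (n:ℝ) + α + β + 1 from by ring,
    show (1 - x) - ((m:ℝ) - n - x) - (n:ℝ) + 1 = 2 - (m:ℝ) from by ring] at h
  exact h
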